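/- Let I ⊆ ℝ/ℤ be a connected subset (an interval) of positive length, and suppose that for every positive integer n the set nI = {n·x : x ∈ I} is contained in I. Then I = ℝ/ℤ. -/
import Mathlib

open Set

/-- A connected subset `I` of the circle `ℝ/ℤ` of positive length (Haar/Lebesgue measure)
which is closed under multiplication by every positive integer `n` (i.e. `n • I ⊆ I`)
must be the whole circle. -/
theorem stmt0 (I : Set UnitAddCircle) (hconn : IsConnected I)
    (hpos : 0 < MeasureTheory.volume I)
    (hmul : ∀ n : ℕ, 0 < n → (fun x : UnitAddCircle => n • x) '' I ⊆ I) :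
    I = Set.univ := by
  by_contra hne
  obtain ⟨y, hy⟩ : ∃ y, y ∉ I := by
    by_contra h; push_neg at h; exact hne (eq_univ_of_forall h)
  obtain ⟨a, rfl⟩ : ∃ a : ℝ, ((a : UnitAddCircle)) = y := QuotientAddGroup.mk_surjective y
  -- the lifting map
  set f : UnitAddCircle → ℝ := fun x => ((AddCircle.equivIoc 1 a x : Ioc a (a+1)) : ℝ) with hf
  have hfcoe : ∀ x : UnitAddCircle, ((f x : ℝ) : UnitAddCircle) = x := by
    intro x
    exact (AddCircle.equivIoc 1 a).symm_apply_apply x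
  have hcont : ContinuousOn f I := by
    intro x hx
    have hxa : x ≠ (a : UnitAddCircle) := fun h => hy (h ▸ hx)
    exact (continuous_subtype_val.continuousAt.comp
      (AddCircle.continuousAt_equivIoc 1 a hxa)).continuousWithinAt
  have hJ : IsPreconnected (f '' I) := hconn.isPreconnected.image f hcont
  -- I has two points
  have hsing : ∀ x : UnitAddCircle, MeasureTheory.volume ({x} : Set UnitAddCircle) = 0 := by
    intro x
    have h0 : ({x} : Set UnitAddCircle) = Metric.closedBall x 0 := by
      simp [Metric.closedBall_zero]
    rw [h0, AddCircle.volume_closedBall]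
    norm_num
  obtain ⟨u, hu, v, hv, huv⟩ : ∃ u ∈ I, ∃ v ∈ I, u ≠ v := by
    by_contra h; push_neg at h
    obtain ⟨u, hu⟩ := hconn.nonempty
    have : I ⊆ {u} := fun v hv => (h u hu v hv).symm
    exact absurd (lt_of_lt_of_le hpos (MeasureTheory.measure_mono this)) (by simp [hsing u])
  have hfuv : f u ≠ f v := by
    intro h
    apply huv
    rw [← hfcoe u, ← hfcoe v, h]
  -- wlog c < d
  obtain ⟨c, hcI, d, hdI, hcd⟩ : ∃ c, ((c:ℝ):UnitAddCircle) ∈ I ∧ ∃ d, ((d:ℝ):UnitAddCircle) ∈ I ∧ c < d ∧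
      Icc c d ⊆ f '' I := by
    rcases lt_or_gt_of_ne hfuv with h | h
    · exact ⟨f u, by rw [hfcoe]; exact hu, f v, by rw [hfcoe]; exact hv,
        h, hJ.ordConnected.out (mem_image_of_mem f hu) (mem_image_of_mem f hv)⟩
    · exact ⟨f v, by rw [hfcoe]; exact hv, f u, by rw [hfcoe]; exact hu,
        h, hJ.ordConnected.out (mem_image_of_mem f hv) (mem_image_of_mem f hu)⟩
  obtain ⟨hcd, hIcc⟩ := hcd
  -- Icc c d maps into I
  have hIccI : (fun t : ℝ => (t : UnitAddCircle)) '' Icc c d ⊆ I := by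
    rintro _ ⟨t, ht, rfl⟩
    obtain ⟨x, hxI, hxt⟩ := hIcc ht
    show ((t:ℝ) : UnitAddCircle) ∈ I
    rw [← hxt, hfcoe]
    exact hxI
  -- choose n
  obtain ⟨n, hn⟩ := exists_nat_ge (1 / (d - c))
  have hdc : (0:ℝ) < d - c := by linarith
  have hn0 : 0 < n := by
    have h : (0:ℝ) < (n:ℝ) := lt_of_lt_of_le (by positivity) hn
    exact_mod_cast h
  have hlen : (n : ℝ) * c + 1 ≤ (n : ℝ) * d := by
    have h1 : (1:ℝ) ≤ (n:ℝ) * (d - c) := by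
      rw [div_le_iff₀ hdc] at hn; linarith
    nlinarith
  -- univ ⊆ I
  apply hy
  have huniv : (univ : Set UnitAddCircle) ⊆ I := by
    have h1 : (fun t : ℝ => (t : UnitAddCircle)) '' Icc ((n:ℝ)*c) ((n:ℝ)*c + 1) = univ :=
      AddCircle.coe_image_Icc_eq 1 ((n:ℝ)*c)
    rw [← h1]
    rintro _ ⟨t, ht, rfl⟩
    have ht' : t ∈ Icc ((n:ℝ)*c) ((n:ℝ)*d) := ⟨ht.1, ht.2.trans hlen⟩
    -- t = n * s for s ∈ Icc c d
    have hs : t / n ∈ Icc c d := by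
      constructor
      · rw [le_div_iff₀ (by exact_mod_cast hn0)]
        linarith [ht'.1]
      · rw [div_le_iff₀ (by exact_mod_cast hn0)]
        linarith [ht'.2]
    have heq : ((t : ℝ) : UnitAddCircle) = n • ((t/n : ℝ) : UnitAddCircle) := by
      rw [← AddCircle.coe_nsmul]
      congr 1
      rw [nsmul_eq_mul]
      field_simp
    show ((t:ℝ) : UnitAddCircle) ∈ I
    rw [heq]
    exact hmul n hn0 ⟨_, hIccI (mem_image_of_mem _ hs), rfl⟩
  exact huniv (mem_univ _)
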